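/- In the 1d Gaussian NCE setting, gradient descent with step size η = o(1) cannot jump over the annulus: if ||τ − τ*|| ≥ 0.2R and τ' = τ − η∇L(τ), then ||τ' − τ*|| > 0.15R (for R sufficiently large). -/

import Mathlib

open MeasureTheory

/-- Noise density `q = N(0,1)`. -/
noncomputable def qpdf (x : ℝ) : ℝ :=
  (1 / Real.sqrt (2 * Real.pi)) * Real.exp (-x ^ 2 / 2)

/-- Data density `p* = N(R,1)`. -/
noncomputable def ppdf (R x : ℝ) : ℝ :=
  (1 / Real.sqrt (2 * Real.pi)) * Real.exp (-(x - R) ^ 2 / 2)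

/-- Model density `p(x) = exp(−x²/2 + bx − c)` for parameter `τ = [b,c]`. -/
noncomputable def pmodel (b c x : ℝ) : ℝ :=
  Real.exp (-x ^ 2 / 2 + b * x - c)

/-- The gradient of the NCE loss, `∇L(τ) = (1/2) ∫ (p−p*)/(p/q + 1) T(x) dx` with
`T(x) = [x, −1]`. -/
noncomputable def gradNCE (R b c : ℝ) (i : Fin 2) : ℝ :=
  (1 / 2) * ∫ x : ℝ, ((pmodel b c x - ppdf R x) / (pmodel b c x / qpdf x + 1)) *
    ![x, (-1 : ℝ)] i

/-- Second coordinate of the optimum `τ* = [R, R²/2 + log √(2π)]`. -/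
noncomputable def cstar (R : ℝ) : ℝ := R ^ 2 / 2 + Real.log (Real.sqrt (2 * Real.pi))

open Real

/-! The gradient is an integral of `(p − p*)/(p/q + 1) · T`, and whatever `τ` is, the weight
`(p − p*)/(p/q + 1)` is dominated by `q + p*`, because `p/(p/q + 1) = pq/(p + q) ≤ q`. Since
`|T(x)| ≤ |x| + 1 ≤ |x − R| + 1 + |R|` and `p*` is `q` shifted by `R`, each coordinate of `∇L(τ)`
is at most `E_q(|X| + 1) + |R|/2 ≤ (|R| + 9)/2`, uniformly in `τ`. A step of size `η ≤ 1/100`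
therefore moves `τ` by at most `(R + 9)/100 < 0.05 R`, which cannot carry it from distance `0.2 R`
of `τ*` to within `0.15 R`. -/

lemma ppdf_eq_qpdf_sub (R x : ℝ) : ppdf R x = qpdf (x - R) := rfl

lemma qpdf_pos (x : ℝ) : 0 < qpdf x := by
  unfold qpdf
  positivity

lemma continuous_qpdf : Continuous qpdf := by
  unfold qpdf
  fun_prop

lemma qpdf_eq_mul_exp (x : ℝ) : qpdf x = (√(2 * π))⁻¹ * exp (-(1 / 2) * x ^ 2) := by
  rw [qpdf, one_div]
  ring_nf

lemma integrable_qpdf : Integrable qpdf := by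
  rw [show qpdf = _ from funext qpdf_eq_mul_exp]
  exact (integrable_exp_neg_mul_sq (by norm_num)).const_mul _

lemma integral_qpdf : ∫ x, qpdf x = 1 := by
  simp only [qpdf_eq_mul_exp, integral_const_mul, integral_gaussian]
  rw [show π / (1 / 2) = 2 * π by ring]
  exact inv_mul_cancel₀ (by positivity)

lemma abs_add_one_mul_exp_neg_sq_le (x : ℝ) :
    (|x| + 1) * exp (-(1 / 2) * x ^ 2) ≤ 3 * exp (-(1 / 4) * x ^ 2) := by
  have hsplit : exp (-(1 / 2) * x ^ 2) = exp (-(1 / 4) * x ^ 2) * exp (-(1 / 4) * x ^ 2) := by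
    rw [← exp_add]; ring_nf
  have hinv : exp (-(1 / 4) * x ^ 2) = (exp ((1 / 4) * x ^ 2))⁻¹ := by
    rw [← exp_neg]; ring_nf
  have hlin : |x| + 1 ≤ 3 * exp ((1 / 4) * x ^ 2) := by
    nlinarith [add_one_le_exp ((1 / 4) * x ^ 2), sq_abs x, sq_nonneg (|x| - 1)]
  have hfactor : (|x| + 1) * exp (-(1 / 4) * x ^ 2) ≤ 3 := by
    rw [hinv, ← div_eq_mul_inv, div_le_iff₀ (exp_pos _)]
    exact hlin
  rw [hsplit, ← mul_assoc]
  exact mul_le_mul_of_nonneg_right hfactor (exp_pos _).le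

lemma abs_add_one_mul_qpdf_le (x : ℝ) :
    (|x| + 1) * qpdf x ≤ 3 * (√(2 * π))⁻¹ * exp (-(1 / 4) * x ^ 2) := by
  calc (|x| + 1) * qpdf x = (√(2 * π))⁻¹ * ((|x| + 1) * exp (-(1 / 2) * x ^ 2)) := by
        rw [qpdf_eq_mul_exp]; ring
    _ ≤ (√(2 * π))⁻¹ * (3 * exp (-(1 / 4) * x ^ 2)) :=
        mul_le_mul_of_nonneg_left (abs_add_one_mul_exp_neg_sq_le x) (by positivity)
    _ = 3 * (√(2 * π))⁻¹ * exp (-(1 / 4) * x ^ 2) := by ring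

lemma integrable_abs_add_one_mul_qpdf : Integrable fun x => (|x| + 1) * qpdf x :=
  ((integrable_exp_neg_mul_sq (by norm_num : (0 : ℝ) < 1 / 4)).const_mul _).mono'
    ((continuous_abs.add continuous_const).mul continuous_qpdf).aestronglyMeasurable
    (ae_of_all _ fun x => by
      rw [Real.norm_of_nonneg (mul_nonneg (by positivity : (0 : ℝ) ≤ |x| + 1) (qpdf_pos x).le)]
      exact abs_add_one_mul_qpdf_le x)

lemma integral_abs_add_one_mul_qpdf_le : ∫ x, (|x| + 1) * qpdf x ≤ 9 / 2 := by
  have hexp := (integrable_exp_neg_mul_sq (by norm_num : (0 : ℝ) < 1 / 4)).const_mul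
    (3 * (√(2 * π))⁻¹)
  calc ∫ x, (|x| + 1) * qpdf x
      ≤ ∫ x, 3 * (√(2 * π))⁻¹ * exp (-(1 / 4) * x ^ 2) :=
        integral_mono integrable_abs_add_one_mul_qpdf hexp abs_add_one_mul_qpdf_le
    _ = 3 * √2 := by
        rw [integral_const_mul, integral_gaussian, show π / (1 / 4) = 2 * (2 * π) by ring,
          sqrt_mul (by norm_num : (0 : ℝ) ≤ 2) (2 * π)]
        field_simp
    _ ≤ 9 / 2 := by nlinarith [sq_sqrt (show (0 : ℝ) ≤ 2 by norm_num), sqrt_nonneg 2]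

lemma abs_sub_div_div_add_one_le {p q s : ℝ} (hp : 0 ≤ p) (hq : 0 < q) (hs : 0 ≤ s) :
    |(p - s) / (p / q + 1)| ≤ q + s := by
  have hden : 1 ≤ p / q + 1 := by linarith [div_nonneg hp hq.le]
  have hp' : p / (p / q + 1) ≤ q := by
    rw [div_le_iff₀ (by linarith), mul_add, mul_div_cancel₀ _ hq.ne']
    linarith
  have hs' : s / (p / q + 1) ≤ s := div_le_self hs hden
  have hnum : |p - s| ≤ p + s := abs_sub_le_iff.2 ⟨by linarith, by linarith⟩
  calc |(p - s) / (p / q + 1)| = |p - s| / (p / q + 1) := by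
        rw [abs_div, abs_of_pos (show 0 < p / q + 1 by linarith)]
    _ ≤ (p + s) / (p / q + 1) := by gcongr
    _ ≤ q + s := by rw [add_div]; linarith

lemma abs_vecCons_neg_one_le (x : ℝ) (i : Fin 2) : |![x, (-1 : ℝ)] i| ≤ |x| + 1 := by
  fin_cases i <;> simp

lemma abs_nceIntegrand_le (R b c x : ℝ) (i : Fin 2) :
    |(pmodel b c x - ppdf R x) / (pmodel b c x / qpdf x + 1) * ![x, (-1 : ℝ)] i| ≤
      (|x| + 1) * qpdf x + (|x - R| + 1) * qpdf (x - R) + |R| * qpdf (x - R) := by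
  have hweight := abs_sub_div_div_add_one_le (exp_pos _).le (qpdf_pos x) (qpdf_pos (x - R)).le
    (p := pmodel b c x)
  have hshift : |x| + 1 ≤ |x - R| + 1 + |R| := by
    linarith [abs_sub_abs_le_abs_sub x R, abs_sub_comm x R]
  rw [abs_mul, ppdf_eq_qpdf_sub]
  calc _ ≤ (qpdf x + qpdf (x - R)) * (|x| + 1) :=
        mul_le_mul hweight (abs_vecCons_neg_one_le x i) (abs_nonneg _)
          (add_pos (qpdf_pos x) (qpdf_pos _)).le
    _ ≤ _ := by nlinarith [qpdf_pos (x - R)]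

lemma abs_gradNCE_le (R b c : ℝ) (i : Fin 2) : |gradNCE R b c i| ≤ (|R| + 9) / 2 := by
  have hmoment := integrable_abs_add_one_mul_qpdf
  have hmoment_R := hmoment.comp_sub_right R
  have hq_R := (integrable_qpdf.comp_sub_right R).const_mul |R|
  have hsum : Integrable fun x => (|x| + 1) * qpdf x + (|x - R| + 1) * qpdf (x - R) :=
    hmoment.add hmoment_R
  have hint : ‖∫ x, (pmodel b c x - ppdf R x) / (pmodel b c x / qpdf x + 1) * ![x, (-1 : ℝ)] i‖
      ≤ |R| + 9 := by
    calc _ ≤ ∫ x, ((|x| + 1) * qpdf x + (|x - R| + 1) * qpdf (x - R) + |R| * qpdf (x - R)) :=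
          norm_integral_le_of_norm_le (hsum.add hq_R)
            (ae_of_all _ fun x => abs_nceIntegrand_le R b c x i)
      _ = (∫ x, (|x| + 1) * qpdf x) + (∫ x, (|x| + 1) * qpdf x) + |R| := by
          rw [integral_add hsum hq_R, integral_add hmoment hmoment_R,
            integral_const_mul, integral_sub_right_eq_self (fun x => (|x| + 1) * qpdf x),
            integral_sub_right_eq_self qpdf, integral_qpdf, mul_one]
      _ ≤ |R| + 9 := by linarith [integral_abs_add_one_mul_qpdf_le]
  rw [Real.norm_eq_abs] at hint
  rw [gradNCE, abs_mul, abs_of_pos (by norm_num : (0 : ℝ) < 1 / 2)]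
  linarith

lemma sqrt_sq_add_sq_le (a d u v : ℝ) :
    √(a ^ 2 + d ^ 2) ≤ √((a - u) ^ 2 + (d - v) ^ 2) + (|u| + |v|) := by
  have htri := norm_le_norm_sub_add (⟨a, d⟩ : ℂ) ⟨u, v⟩
  have hw := Complex.norm_le_abs_re_add_abs_im ⟨u, v⟩
  simp only [Complex.norm_def, Complex.normSq_apply, Complex.sub_re, Complex.sub_im, ← sq]
    at htri hw
  linarith

/-- In the 1d Gaussian NCE setting, gradient descent with a sufficiently small step size
cannot jump over the annulus: if `‖τ − τ*‖ ≥ 0.2R` and `τ' = τ − η∇L(τ)`, then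
`‖τ' − τ*‖ > 0.15R` (for `R` sufficiently large). -/
theorem nce_gd_cannot_jump_annulus :
    ∃ η0 : ℝ, 0 < η0 ∧ ∃ R0 : ℝ, ∀ R : ℝ, R0 ≤ R → ∀ η : ℝ, 0 < η → η ≤ η0 →
      ∀ b c : ℝ,
        0.2 * R ≤ Real.sqrt ((b - R) ^ 2 + (c - cstar R) ^ 2) →
        0.15 * R < Real.sqrt
          ((b - η * gradNCE R b c 0 - R) ^ 2 +
            (c - η * gradNCE R b c 1 - cstar R) ^ 2) := by
  refine ⟨1 / 100, by norm_num, 9, fun R hR η hη hη0 b c hfar => ?_⟩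
  have hstep (i : Fin 2) : |η * gradNCE R b c i| ≤ (R + 9) / 200 := by
    have hgrad := abs_gradNCE_le R b c i
    rw [abs_of_nonneg (by linarith : 0 ≤ R)] at hgrad
    rw [abs_mul, abs_of_pos hη]
    calc η * |gradNCE R b c i| ≤ (1 / 100) * ((R + 9) / 2) :=
          mul_le_mul hη0 hgrad (abs_nonneg _) (by norm_num)
      _ = (R + 9) / 200 := by ring
  have htri := sqrt_sq_add_sq_le (b - R) (c - cstar R)
    (η * gradNCE R b c 0) (η * gradNCE R b c 1)
  rw [sub_right_comm b, sub_right_comm c] at htri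
  linarith [hstep 0, hstep 1]
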